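/- arXiv:2304.05267 — 2 statements merged into one kernel-verified Lean document; each statement's English description precedes it below -/
import Mathlib

section
/- Let Γ be a finite simple graph and Λ an induced subgraph of Γ. The normalizer in A(Γ) of the subgroup ⟨Λ⟩ is the subgroup ⟨ Λ ∪ link(Λ) ⟩ generated by the vertices of Λ together with the vertices of Γ adjacent to every vertex of Λ. -/
universe u

/-- The defining relators of the right-angled Artin group of a simple graph. -/
def raagRels {V : Type u} (Γ : SimpleGraph V) : Set (FreeGroup V) :=
  {r | ∃ u v : V, Γ.Adj u v ∧
    r = FreeGroup.of u * FreeGroup.of v * (FreeGroup.of u)⁻¹ * (FreeGroup.of v)⁻¹}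

/-- The right-angled Artin group of a simple graph. -/
abbrev RAAG {V : Type u} (Γ : SimpleGraph V) : Type u := PresentedGroup (raagRels Γ)

/-- The generator of `RAAG Γ` corresponding to a vertex. -/
def raagGen {V : Type u} (Γ : SimpleGraph V) (u : V) : RAAG Γ :=
  PresentedGroup.of (rels := raagRels Γ) u

/-- The link of a set of vertices: the vertices adjacent to every vertex of `S`. -/
def linkSet {V : Type u} (Γ : SimpleGraph V) (S : Set V) : Set V :=
  {v | ∀ u ∈ S, Γ.Adj v u}

/-!
The generators of `link Λ` commute with `⟨Λ⟩`, so `⟨Λ ∪ link Λ⟩` normalises `⟨Λ⟩`. Conversely,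
the retraction of `A(Γ)` onto `⟨Λ⟩` killing all other vertices corrects an element of the
normaliser, by an element of `⟨Λ⟩`, into one that centralises `Λ`; so it suffices that the
centraliser of `Λ` lies in `⟨Λ ∪ link Λ⟩`. This goes by induction on the number of vertices.
If some vertex `v` lies outside `Λ ∪ link Λ`, pick `s ∈ Λ` not adjacent to `v`. Then `A(Γ)` is
the amalgamated product of `A(Γ - v)` and `A(star v)` over `A(link v)`; the generator `s` lies
in the first factor and is not conjugate there into `A(link v)` (look at its exponent sum), so
the normal form theorem for amalgams puts everything commuting with `s` into `A(Γ - v)`, where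
the induction hypothesis applies.
-/

namespace Monoid.PushoutI

variable {ι : Type*} {G : ι → Type*} {H : Type*} [∀ i, Group (G i)] [Group H]
  {φ : ∀ i, H →* G i}

-- `Reduced` on bare lists, which unlike `CoprodI.Word`s can be cut and concatenated freely.
variable (φ) in
def ReducedList (l : List (Σ i, G i)) : Prop :=
  (l.map Sigma.fst).IsChain (· ≠ ·) ∧ ∀ p ∈ l, p.2 ∉ (φ p.1).range

variable (φ) in
def listProd (l : List (Σ i, G i)) : PushoutI φ :=
  (l.map fun p => of p.1 p.2).prod

@[simp] theorem listProd_nil : listProd φ [] = 1 := rfl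

@[simp] theorem listProd_cons (p : Σ i, G i) (l : List (Σ i, G i)) :
    listProd φ (p :: l) = of p.1 p.2 * listProd φ l := by
  simp [listProd]

@[simp] theorem listProd_append (l₁ l₂ : List (Σ i, G i)) :
    listProd φ (l₁ ++ l₂) = listProd φ l₁ * listProd φ l₂ := by
  simp [listProd]

def listInv (l : List (Σ i, G i)) : List (Σ i, G i) :=
  (l.map fun p => ⟨p.1, p.2⁻¹⟩).reverse

@[simp] theorem listProd_listInv (l : List (Σ i, G i)) :
    listProd φ (listInv l) = (listProd φ l)⁻¹ := by
  induction l with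
  | nil => rfl
  | cons p l ih => simp [listInv, ← ih]

theorem reducedList_append_singleton {l : List (Σ i, G i)} {i : ι} {x : G i} :
    ReducedList φ (l ++ [⟨i, x⟩]) ↔
      (l.map Sigma.fst ++ [i]).IsChain (· ≠ ·) ∧ (∀ p ∈ l, p.2 ∉ (φ p.1).range) ∧
        x ∉ (φ i).range := by
  simp [ReducedList, or_imp, forall_and]

theorem ReducedList.of_append_singleton {l : List (Σ i, G i)} {p : Σ i, G i}
    (hl : ReducedList φ (l ++ [p])) : ReducedList φ l :=
  ⟨hl.1.prefix (by simp), fun q hq => hl.2 q (List.mem_append_left _ hq)⟩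

theorem ReducedList.eq_nil_of_listProd_mem_range_base (hφ : ∀ i, Function.Injective (φ i))
    {l : List (Σ i, G i)} (hl : ReducedList φ l) (h : listProd φ l ∈ (base φ).range) :
    l = [] := by
  let w : CoprodI.Word G :=
    ⟨l, fun p hp h1 => hl.2 p hp (h1 ▸ one_mem _), List.isChain_map _ |>.1 hl.1⟩
  have hw : Reduced φ w := hl.2
  have := hw.eq_empty_of_mem_range hφ (by
    simpa [w, CoprodI.Word.prod, listProd, map_list_prod, Function.comp_def] using h)
  simpa [w, CoprodI.Word.empty] using congrArg CoprodI.Word.toList this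

theorem ReducedList.eq_nil_of_listProd_mem_range_of (hφ : ∀ i, Function.Injective (φ i))
    {l : List (Σ i, G i)} {j : ι} (hl : ReducedList φ l)
    (hj : (l.map Sigma.fst ++ [j]).IsChain (· ≠ ·))
    (h : listProd φ l ∈ (of j).range) : l = [] := by
  obtain ⟨c, hc⟩ := h
  by_cases hcφ : c ∈ (φ j).range
  · obtain ⟨b, rfl⟩ := hcφ
    exact hl.eq_nil_of_listProd_mem_range_base hφ ⟨b, by rw [← hc, of_apply_eq_base]⟩
  · have hred : ReducedList φ (l ++ [⟨j, c⁻¹⟩]) :=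
      reducedList_append_singleton.2 ⟨hj, hl.2, by simpa using hcφ⟩
    have := hred.eq_nil_of_listProd_mem_range_base hφ ⟨1, by simp [← hc]⟩
    simp at this

theorem ReducedList.length_le_one_of_listProd_mem_range_of (hφ : ∀ i, Function.Injective (φ i))
    {l : List (Σ i, G i)} {j : ι} (hl : ReducedList φ l) (h : listProd φ l ∈ (of j).range) :
    l.length ≤ 1 := by
  rcases l.eq_nil_or_concat' with rfl | ⟨L, ⟨i, x⟩, rfl⟩
  · simp
  by_cases hij : i = j
  · subst hij
    have hL : listProd φ L ∈ (of i).range := by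
      simpa using mul_mem h (inv_mem ⟨x, rfl⟩ : (of (φ := φ) i x)⁻¹ ∈ (of i).range)
    have := hl.of_append_singleton.eq_nil_of_listProd_mem_range_of hφ
      (reducedList_append_singleton.1 hl).1 hL
    simp [this]
  · have := hl.eq_nil_of_listProd_mem_range_of hφ
      (by simpa [List.isChain_append, hij] using (reducedList_append_singleton.1 hl).1) h
    simp at this

theorem ReducedList.eq_nil_of_conj_mem_range_of (hφ : ∀ i, Function.Injective (φ i))
    {l : List (Σ i, G i)} {i : ι} {a : G i}
    (hl : ReducedList φ (l ++ [⟨i, a⟩]))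
    (h : listProd φ l * of i a * (listProd φ l)⁻¹ ∈ (of i).range) : l = [] := by
  have hchain : (l.map Sigma.fst ++ [i]).IsChain (· ≠ ·) := by simpa using hl.1
  have hW : ReducedList φ (l ++ [⟨i, a⟩] ++ listInv l) := by
    refine ⟨?_, ?_⟩
    · have hrev : ([i] ++ (l.map Sigma.fst).reverse).IsChain (· ≠ ·) := by
        have := List.isChain_reverse.2 (hchain.imp fun _ _ => Ne.symm)
        simpa using this
      have := hchain.append_overlap hrev (by simp)
      simpa [listInv, Function.comp_def] using this
    · intro p hp
      simp only [listInv, List.mem_append, List.mem_reverse, List.mem_map] at hp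
      rcases hp with hp | ⟨q, hq, rfl⟩
      · exact hl.2 p (List.mem_append.2 hp)
      · simpa using hl.2 q (List.mem_append_left _ hq)
  have hlen := hW.length_le_one_of_listProd_mem_range_of hφ
    (by simpa [mul_assoc] using h)
  simp [listInv] at hlen
  exact List.eq_nil_of_length_eq_zero (by omega)

theorem exists_base_mul_listProd (hφ : ∀ i, Function.Injective (φ i)) (g : PushoutI φ) :
    ∃ b l, ReducedList φ l ∧ base φ b * listProd φ l = g := by
  classical
  obtain ⟨d⟩ := NormalWord.transversal_nonempty φ hφ
  let w : NormalWord d := g • NormalWord.empty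
  refine ⟨w.head, w.toList, ⟨(List.isChain_map _).2 w.chain_ne, ?_⟩, ?_⟩
  · rintro ⟨i, x⟩ hx ⟨y, hy⟩
    -- the transversal `d.set i` meets `(φ i).range` only in `1`
    have hinj := (d.compl i).1 (a₁ := ⟨⟨x, y, hy⟩, ⟨1, d.one_mem i⟩⟩)
      (a₂ := ⟨⟨1, one_mem _⟩, ⟨x, w.normalized i x hx⟩⟩) (by simp)
    exact w.ne_one ⟨i, x⟩ hx (by simpa using congrArg (fun z => (z.1 : G i)) hinj)
  · have hw : w.prod = g := by simp [w, NormalWord.prod_smul]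
    simpa [NormalWord.prod, CoprodI.Word.prod, listProd, map_list_prod, Function.comp_def]
      using hw

theorem mem_range_of_conj_mem_range (hφ : ∀ i, Function.Injective (φ i)) {i : ι} {a : G i}
    (ha : ∀ x : G i, x * a * x⁻¹ ∉ (φ i).range) {g : PushoutI φ}
    (h : g * of i a * g⁻¹ ∈ (of i).range) : g ∈ (of i).range := by
  obtain ⟨b, l, hl, rfl⟩ := exists_base_mul_listProd hφ g
  have hb : base φ b ∈ (of i).range := ⟨φ i b, of_apply_eq_base φ i b⟩
  have hl' : listProd φ l * of i a * (listProd φ l)⁻¹ ∈ (of i).range := by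
    convert mul_mem (mul_mem (inv_mem hb) h) hb using 1
    group
  rcases l.eq_nil_or_concat' with rfl | ⟨L, ⟨j, x⟩, rfl⟩
  · simpa using hb
  by_cases hji : j = i
  · subst hji
    have hred : ReducedList φ (L ++ [⟨j, x * a * x⁻¹⟩]) := by
      obtain ⟨hc, hL, -⟩ := reducedList_append_singleton.1 hl
      exact reducedList_append_singleton.2 ⟨hc, hL, ha x⟩
    have hL := hred.eq_nil_of_conj_mem_range_of hφ (by simpa [mul_assoc] using hl')
    subst hL
    simpa using mul_mem hb ⟨x, rfl⟩
  · have hred : ReducedList φ (L ++ [⟨j, x⟩] ++ [⟨i, a⟩]) := by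
      refine reducedList_append_singleton.2 ⟨?_, hl.2, by simpa using ha 1⟩
      simpa [List.isChain_append, hji] using hl.1
    have := hred.eq_nil_of_conj_mem_range_of hφ hl'
    simp at this

end Monoid.PushoutI

theorem Subgroup.mem_centralizer_of_mem_normalizer_of_retraction {G : Type*} [Group G]
    {H : Subgroup G} (r : G →* G) (hr : ∀ x ∈ H, r x = x) {g : G}
    (hg : g ∈ normalizer (H : Set G)) (hrg : r g = 1) : g ∈ centralizer (H : Set G) := by
  rw [mem_centralizer_iff]
  intro x hx
  have hconj : g * x * g⁻¹ = x := by
    rw [← hr _ ((mem_normalizer_iff.1 hg x).1 hx), map_mul, map_mul, map_inv, hrg, hr x hx,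
      one_mul, inv_one, mul_one]
  exact (mul_inv_eq_iff_eq_mul.1 hconj).symm

open Monoid

namespace RAAG

variable {V V' : Type*}

section Basic

variable (Γ : SimpleGraph V)

theorem raagGen_commute {u v : V} (h : Γ.Adj u v) : Commute (raagGen Γ u) (raagGen Γ v) := by
  have hrel : raagGen Γ u * raagGen Γ v * (raagGen Γ u)⁻¹ * (raagGen Γ v)⁻¹ = 1 :=
    PresentedGroup.one_of_mem ⟨u, v, h, rfl⟩
  rw [← commutatorElement_def] at hrel
  exact commutatorElement_eq_one_iff_commute.1 hrel

variable {Γ} in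
def lift {G : Type*} [Group G] (f : V → G) (hf : ∀ u v, Γ.Adj u v → Commute (f u) (f v)) :
    RAAG Γ →* G :=
  PresentedGroup.toGroup (f := f) (by
    rintro _ ⟨u, v, huv, rfl⟩
    simpa [← commutatorElement_def, commutatorElement_eq_one_iff_commute] using hf u v huv)

@[simp] theorem lift_raagGen {G : Type*} [Group G] (f : V → G)
    (hf : ∀ u v, Γ.Adj u v → Commute (f u) (f v)) (u : V) : lift f hf (raagGen Γ u) = f u :=
  PresentedGroup.toGroup.of _

theorem closure_range_raagGen : Subgroup.closure (Set.range (raagGen Γ)) = ⊤ :=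
  PresentedGroup.closure_range_of _

@[ext] theorem hom_ext {G : Type*} [Group G] {f g : RAAG Γ →* G}
    (h : ∀ u, f (raagGen Γ u) = g (raagGen Γ u)) : f = g :=
  PresentedGroup.ext h

end Basic

variable {Γ' : SimpleGraph V'} {Γ : SimpleGraph V}

def map (f : Γ' →g Γ) : RAAG Γ' →* RAAG Γ :=
  lift (fun u => raagGen Γ (f u)) fun _ _ h => raagGen_commute Γ (f.map_adj h)

@[simp] theorem map_raagGen (f : Γ' →g Γ) (u : V') : map f (raagGen Γ' u) = raagGen Γ (f u) :=
  lift_raagGen _ _ _ _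

theorem map_closure_raagGen (f : Γ' →g Γ) (A : Set V') :
    (Subgroup.closure (raagGen Γ' '' A)).map (map f) =
      Subgroup.closure (raagGen Γ '' (f '' A)) := by
  rw [MonoidHom.map_closure, Set.image_image, Set.image_image]
  simp

theorem range_map (f : Γ' →g Γ) :
    (map f).range = Subgroup.closure (raagGen Γ '' Set.range f) := by
  rw [MonoidHom.range_eq_map, ← closure_range_raagGen, ← Set.image_univ,
    map_closure_raagGen, Set.image_univ]

noncomputable def comap (f : Γ' ↪g Γ) : RAAG Γ →* RAAG Γ' := by
  classical
  exact lift (fun u => if h : ∃ a, f a = u then raagGen Γ' h.choose else 1) (by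
    intro u w huw
    split_ifs with hu hw hw
    · refine raagGen_commute Γ' (f.map_adj_iff.1 ?_)
      rwa [hu.choose_spec, hw.choose_spec]
    all_goals simp)

@[simp] theorem comap_map (f : Γ' ↪g Γ) (x : RAAG Γ') : comap f (map f.toHom x) = x := by
  suffices (comap f).comp (map f.toHom) = MonoidHom.id _ from DFunLike.congr_fun this x
  ext u
  simp [comap]

theorem map_injective (f : Γ' ↪g Γ) : Function.Injective (map f.toHom) :=
  Function.LeftInverse.injective (comap_map f)

noncomputable def exponentSum (s : V) : RAAG Γ →* Multiplicative ℤ := by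
  classical
  exact lift (fun u => if u = s then Multiplicative.ofAdd 1 else 1) fun _ _ _ => Commute.all _ _

theorem conj_raagGen_notMem_range_map {f : Γ' →g Γ} {s : V} (hs : s ∉ Set.range f)
    (x : RAAG Γ) : x * raagGen Γ s * x⁻¹ ∉ (map f).range := by
  rintro ⟨y, hy⟩
  have hf : (exponentSum s).comp (map f) = 1 := by
    ext u
    simpa [exponentSum] using fun h => hs ⟨u, h⟩
  have := congrArg (exponentSum s) hy
  rw [← MonoidHom.comp_apply, hf, map_mul, map_mul, map_inv, mul_inv_cancel_comm] at this
  simp only [exponentSum, lift_raagGen, if_true, MonoidHom.one_apply] at this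
  exact one_ne_zero (ofAdd_eq_one.1 this.symm)

section Splitting

variable (Γ) (v : V)

def amalgamPiece : Bool → Set V
  | true => insert v (Γ.neighborSet v)
  | false => {v}ᶜ

theorem neighborSet_subset_amalgamPiece : ∀ b, Γ.neighborSet v ⊆ amalgamPiece Γ v b
  | true => Set.subset_insert _ _
  | false => fun _ hu => (Γ.ne_of_adj hu).symm

noncomputable def amalgamIncl (b : Bool) :
    RAAG (Γ.induce (Γ.neighborSet v)) →* RAAG (Γ.induce (amalgamPiece Γ v b)) :=
  map (Γ.induceHomOfLE (neighborSet_subset_amalgamPiece Γ v b)).toHom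

theorem amalgamIncl_injective (b : Bool) : Function.Injective (amalgamIncl Γ v b) :=
  map_injective _

noncomputable def ofAmalgam : PushoutI (amalgamIncl Γ v) →* RAAG Γ :=
  PushoutI.lift (fun b => map (SimpleGraph.Embedding.induce _).toHom)
    (map (SimpleGraph.Embedding.induce _).toHom) fun b => by ext; simp [amalgamIncl]; rfl

theorem of_raagGen_eq_of_raagGen {w : V} (hw : w ∈ Γ.neighborSet v) (b c : Bool) :
    PushoutI.of (φ := amalgamIncl Γ v) b
        (raagGen _ ⟨w, neighborSet_subset_amalgamPiece Γ v b hw⟩) =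
      PushoutI.of c (raagGen _ ⟨w, neighborSet_subset_amalgamPiece Γ v c hw⟩) := by
  have hb := PushoutI.of_apply_eq_base (amalgamIncl Γ v) b (raagGen _ ⟨w, hw⟩)
  have hc := PushoutI.of_apply_eq_base (amalgamIncl Γ v) c (raagGen _ ⟨w, hw⟩)
  simp only [amalgamIncl, map_raagGen] at hb hc
  exact hb.trans hc.symm

open Classical in
noncomputable def toAmalgamGen (u : V) : PushoutI (amalgamIncl Γ v) :=
  if h : u = v then PushoutI.of true (raagGen _ ⟨v, Set.mem_insert _ _⟩)
  else PushoutI.of false (raagGen _ ⟨u, h⟩)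

theorem toAmalgamGen_of_mem_star {u : V} (hu : u ∈ amalgamPiece Γ v true) :
    toAmalgamGen Γ v u = PushoutI.of true (raagGen _ ⟨u, hu⟩) := by
  rcases hu with rfl | hu
  · simp [toAmalgamGen]
  · rw [toAmalgamGen, dif_neg (Γ.ne_of_adj hu).symm]
    exact of_raagGen_eq_of_raagGen Γ v hu false true

noncomputable def toAmalgam : RAAG Γ →* PushoutI (amalgamIncl Γ v) :=
  lift (toAmalgamGen Γ v) fun u w huw => by
    by_cases h : u = v ∨ w = v
    · have hu : u ∈ amalgamPiece Γ v true := by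
        rcases h with rfl | rfl
        exacts [Set.mem_insert _ _, Set.mem_insert_of_mem _ huw.symm]
      have hw : w ∈ amalgamPiece Γ v true := by
        rcases h with rfl | rfl
        exacts [Set.mem_insert_of_mem _ huw, Set.mem_insert _ _]
      rw [toAmalgamGen_of_mem_star Γ v hu, toAmalgamGen_of_mem_star Γ v hw]
      exact (raagGen_commute (Γ.induce _) (u := ⟨u, hu⟩) (v := ⟨w, hw⟩) huw).map _
    · rw [not_or] at h
      rw [toAmalgamGen, toAmalgamGen, dif_neg h.1, dif_neg h.2]
      exact (raagGen_commute (Γ.induce _) (u := ⟨u, h.1⟩) (v := ⟨w, h.2⟩) huw).map _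

theorem ofAmalgam_toAmalgam (x : RAAG Γ) : ofAmalgam Γ v (toAmalgam Γ v x) = x := by
  suffices (ofAmalgam Γ v).comp (toAmalgam Γ v) = MonoidHom.id _ from DFunLike.congr_fun this x
  ext u
  by_cases hu : u = v
  · subst hu; simp [toAmalgam, toAmalgamGen, ofAmalgam]
  · simp [toAmalgam, toAmalgamGen, ofAmalgam, hu]

theorem mem_range_map_induce_compl_of_commute {s : V} (hsv : s ≠ v) (hadj : ¬Γ.Adj s v)
    {k : RAAG Γ} (hk : Commute k (raagGen Γ s)) :
    k ∈ (map (SimpleGraph.Embedding.induce ({v}ᶜ : Set V)).toHom).range := by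
  have ha : ∀ x, x * raagGen _ ⟨s, hsv⟩ * x⁻¹ ∉ (amalgamIncl Γ v false).range :=
    conj_raagGen_notMem_range_map fun ⟨w, hw⟩ => hadj (congrArg Subtype.val hw ▸ w.2).symm
  have hconj : toAmalgam Γ v k * PushoutI.of false (raagGen _ ⟨s, hsv⟩) *
      (toAmalgam Γ v k)⁻¹ ∈ (PushoutI.of false).range := by
    have hs : toAmalgam Γ v (raagGen Γ s) = PushoutI.of false (raagGen _ ⟨s, hsv⟩) := by
      simp [toAmalgam, toAmalgamGen, hsv]
    rw [← hs, ← map_inv, ← map_mul, ← map_mul, hk.mul_inv_cancel, hs]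
    exact ⟨_, rfl⟩
  obtain ⟨k₀, hk₀⟩ :=
    PushoutI.mem_range_of_conj_mem_range (amalgamIncl_injective Γ v) ha hconj
  refine ⟨k₀, ?_⟩
  rw [← ofAmalgam_toAmalgam Γ v k, ← hk₀, ofAmalgam, PushoutI.lift_of]
  rfl

end Splitting

section Normalizer

variable (Γ) (S : Set V)

theorem centralizer_le_closure_union_linkSet [Finite V] :
    Subgroup.centralizer (raagGen Γ '' S) ≤
      Subgroup.closure (raagGen Γ '' (S ∪ linkSet Γ S)) := by
  induction hn : Nat.card V using Nat.strong_induction_on generalizing V with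
  | _ n ih =>
  by_cases hT : S ∪ linkSet Γ S = Set.univ
  · simp [hT, closure_range_raagGen]
  obtain ⟨v, hv⟩ := (Set.ne_univ_iff_exists_notMem _).1 hT
  have hvS : v ∉ S := fun h => hv (Or.inl h)
  obtain ⟨s, hs, hadj⟩ : ∃ s ∈ S, ¬Γ.Adj s v := by
    by_contra! h
    exact hv (Or.inr fun s hs => (h s hs).symm)
  intro k hk
  let e := SimpleGraph.Embedding.induce (G := Γ) ({v}ᶜ : Set V)
  obtain ⟨k₀, rfl⟩ := mem_range_map_induce_compl_of_commute Γ v (ne_of_mem_of_not_mem hs hvS)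
    hadj (Subgroup.mem_centralizer_iff.1 hk _ ⟨s, hs, rfl⟩).symm
  have hk₀ : k₀ ∈ Subgroup.centralizer (raagGen _ '' (e ⁻¹' S)) := by
    rw [Subgroup.mem_centralizer_iff]
    rintro _ ⟨t, ht, rfl⟩
    apply map_injective e
    simpa [e] using Subgroup.mem_centralizer_iff.1 hk _ ⟨t, ht, rfl⟩
  have hcard : Nat.card ({v}ᶜ : Set V) < n := hn ▸ Set.ncard_lt_card (by simp)
  have hmem := Subgroup.mem_map_of_mem (map e.toHom) (ih _ hcard _ _ rfl hk₀)
  rw [map_closure_raagGen] at hmem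
  refine Subgroup.closure_mono (Set.image_mono ?_) hmem
  rintro _ ⟨u, hu | hu, rfl⟩
  · exact Or.inl hu
  · exact Or.inr fun t ht => hu ⟨t, ne_of_mem_of_not_mem ht hvS⟩ ht

theorem range_map_induce :
    (map (SimpleGraph.Embedding.induce (G := Γ) S).toHom).range =
      Subgroup.closure (raagGen Γ '' S) := by
  rw [range_map]
  congr
  exact Subtype.range_coe

noncomputable def retract : RAAG Γ →* RAAG Γ :=
  (map (SimpleGraph.Embedding.induce S).toHom).comp (comap (SimpleGraph.Embedding.induce S))

theorem retract_mem_closure (g : RAAG Γ) : retract Γ S g ∈ Subgroup.closure (raagGen Γ '' S) :=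
  range_map_induce Γ S ▸ ⟨_, rfl⟩

theorem retract_eq_self {x : RAAG Γ} (hx : x ∈ Subgroup.closure (raagGen Γ '' S)) :
    retract Γ S x = x := by
  rw [← range_map_induce] at hx
  obtain ⟨y, rfl⟩ := hx
  simp [retract]

theorem mul_inv_retract_mem_centralizer {g : RAAG Γ}
    (hg : g ∈ Subgroup.normalizer (Subgroup.closure (raagGen Γ '' S) : Set (RAAG Γ))) :
    g * (retract Γ S g)⁻¹ ∈ Subgroup.centralizer (raagGen Γ '' S) := by
  rw [← Subgroup.centralizer_closure]
  refine Subgroup.mem_centralizer_of_mem_normalizer_of_retraction (retract Γ S)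
    (fun _ => retract_eq_self Γ S) ?_ ?_
  · exact mul_mem hg (inv_mem (Subgroup.le_normalizer (retract_mem_closure Γ S g)))
  · rw [map_mul, map_inv, retract_eq_self Γ S (retract_mem_closure Γ S g), mul_inv_cancel]

theorem closure_union_linkSet_le_normalizer :
    Subgroup.closure (raagGen Γ '' (S ∪ linkSet Γ S)) ≤
      Subgroup.normalizer (Subgroup.closure (raagGen Γ '' S) : Set (RAAG Γ)) := by
  rw [Subgroup.closure_le, Set.image_union, Set.union_subset_iff]
  refine ⟨Subgroup.subset_closure.trans Subgroup.le_normalizer,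
    subset_trans ?_ (Subgroup.centralizer_le_normalizer _)⟩
  rw [Subgroup.centralizer_closure]
  rintro _ ⟨u, hu, rfl⟩
  rw [SetLike.mem_coe, Subgroup.mem_centralizer_iff]
  rintro _ ⟨s, hs, rfl⟩
  exact (raagGen_commute Γ (hu s hs)).symm.eq

end Normalizer

end RAAG

/-- The normaliser of `⟨Λ⟩` in `A(Γ)` is `⟨Λ ∪ link(Λ)⟩`. -/
theorem normalizer_vertex_subgroup {V : Type u} [Fintype V] (Γ : SimpleGraph V)
    (S : Set V) :
    Subgroup.normalizer ((Subgroup.closure (raagGen Γ '' S) : Subgroup (RAAG Γ)) : Set (RAAG Γ)) =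
      Subgroup.closure (raagGen Γ '' (S ∪ linkSet Γ S)) := by
  refine le_antisymm (fun g hg => ?_) (RAAG.closure_union_linkSet_le_normalizer Γ S)
  have hcent := RAAG.centralizer_le_closure_union_linkSet Γ S
    (RAAG.mul_inv_retract_mem_centralizer Γ S hg)
  have hretract : RAAG.retract Γ S g ∈ Subgroup.closure (raagGen Γ '' (S ∪ linkSet Γ S)) :=
    Subgroup.closure_mono (Set.image_mono Set.subset_union_left) (RAAG.retract_mem_closure Γ S g)
  simpa using mul_mem hcent hretract
end

section
/- Let Γ be a finite simple graph. Every non-trivial subgroup of the right-angled Artin group A(Γ) admits a surjective group homomorphism onto ℤ. -/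
universe u

section Basic

variable {V : Type u} {Γ : SimpleGraph V}

lemma raagGen_comm {u v : V} (h : Γ.Adj u v) :
    Commute (raagGen Γ u) (raagGen Γ v) := by
  have hr : (FreeGroup.of u * FreeGroup.of v * (FreeGroup.of u)⁻¹ * (FreeGroup.of v)⁻¹ :
      FreeGroup V) ∈ Subgroup.normalClosure (raagRels Γ) :=
    Subgroup.subset_normalClosure ⟨u, v, h, rfl⟩
  have h1 : raagGen Γ u * raagGen Γ v * (raagGen Γ u)⁻¹ * (raagGen Γ v)⁻¹ = 1 := by
    have := (QuotientGroup.eq_one_iff (N := Subgroup.normalClosure (raagRels Γ))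
      (FreeGroup.of u * FreeGroup.of v * (FreeGroup.of u)⁻¹ * (FreeGroup.of v)⁻¹)).2 hr
    exact this
  unfold Commute SemiconjBy
  calc raagGen Γ u * raagGen Γ v
      = (raagGen Γ u * raagGen Γ v * (raagGen Γ u)⁻¹ * (raagGen Γ v)⁻¹) *
        (raagGen Γ v * raagGen Γ u) := by group
    _ = raagGen Γ v * raagGen Γ u := by rw [h1]; group

/-- Lift a vertex assignment with commuting adjacent images to a hom on the RAAG. -/
def raagLift {G : Type*} [Group G] (f : V → G)
    (hf : ∀ u v : V, Γ.Adj u v → Commute (f u) (f v)) : RAAG Γ →* G :=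
  PresentedGroup.toGroup (f := f) (by
    rintro r ⟨a, b, hab, rfl⟩
    have h := hf a b hab
    simp only [map_mul, map_inv, FreeGroup.lift_apply_of]
    rw [h.eq]
    group)

@[simp] lemma raagLift_gen {G : Type*} [Group G] (f : V → G)
    (hf : ∀ u v : V, Γ.Adj u v → Commute (f u) (f v)) (v : V) :
    raagLift f hf (raagGen Γ v) = f v :=
  PresentedGroup.toGroup.of _

lemma raag_hom_ext {G : Type*} [Group G] {φ ψ : RAAG Γ →* G}
    (h : ∀ v : V, φ (raagGen Γ v) = ψ (raagGen Γ v)) : φ = ψ :=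
  PresentedGroup.ext h

end Basic

section Decomposition

variable {V : Type u} (Γ : SimpleGraph V) (p : V → Prop)

/-- The subgroup of the free group on the independent set generated by neighbours of `t`. -/
def raagK (t : {v : V // ¬ p v}) : Subgroup (FreeGroup {v : V // p v}) :=
  Subgroup.closure {x | ∃ s : {v : V // p v}, Γ.Adj ↑s ↑t ∧ x = FreeGroup.of s}

/-- Vertices of the unfolded graph. -/
abbrev raagDV : Type u := Σ t : {v : V // ¬ p v}, FreeGroup {v : V // p v} ⧸ raagK Γ p t

/-- The unfolded graph. -/
def raagD : SimpleGraph (raagDV Γ p) where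
  Adj x y := Γ.Adj ↑x.1 ↑y.1 ∧ ∃ w : FreeGroup {v : V // p v},
    x.2 = QuotientGroup.mk w ∧ y.2 = QuotientGroup.mk w
  symm := by
    constructor
    rintro x y ⟨hadj, w, hx, hy⟩
    exact ⟨hadj.symm, w, hy, hx⟩
  loopless := by
    constructor
    rintro x ⟨hadj, -⟩
    exact Γ.loopless.irrefl _ hadj

/-- The embedding of the free group on the independent set into the RAAG. -/
def raagι : FreeGroup {v : V // p v} →* RAAG Γ := FreeGroup.lift (fun s => raagGen Γ ↑s)

@[simp] lemma raagι_of (s : {v : V // p v}) : raagι Γ p (FreeGroup.of s) = raagGen Γ ↑s :=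
  FreeGroup.lift_apply_of

/-- Translation action on the unfolded RAAG. -/
def raagAct (w : FreeGroup {v : V // p v}) : RAAG (raagD Γ p) →* RAAG (raagD Γ p) :=
  raagLift (fun x => raagGen (raagD Γ p) ⟨x.1, w • x.2⟩) (by
    rintro x y ⟨hadj, u, hx, hy⟩
    refine raagGen_comm ⟨hadj, w * u, ?_, ?_⟩ <;>
      simp [hx, hy, MulAction.Quotient.smul_mk])

@[simp] lemma raagAct_gen (w : FreeGroup {v : V // p v}) (x : raagDV Γ p) :
    raagAct Γ p w (raagGen (raagD Γ p) x) = raagGen (raagD Γ p) ⟨x.1, w • x.2⟩ :=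
  raagLift_gen _ _ _

lemma raagAct_one : raagAct Γ p 1 = MonoidHom.id _ := by
  apply raag_hom_ext
  intro x
  simp

lemma raagAct_mul (w w' : FreeGroup {v : V // p v}) :
    raagAct Γ p (w * w') = (raagAct Γ p w).comp (raagAct Γ p w') := by
  apply raag_hom_ext
  intro x
  simp [mul_smul]

/-- The action as a homomorphism to automorphisms. -/
def raagρ : FreeGroup {v : V // p v} →* MulAut (RAAG (raagD Γ p)) where
  toFun w := MonoidHom.toMulEquiv (raagAct Γ p w) (raagAct Γ p w⁻¹)
    (by rw [← raagAct_mul, inv_mul_cancel, raagAct_one])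
    (by rw [← raagAct_mul, mul_inv_cancel, raagAct_one])
  map_one' := by
    ext b
    simpa using DFunLike.congr_fun (raagAct_one Γ p) b
  map_mul' w w' := by
    ext b
    simpa using DFunLike.congr_fun (raagAct_mul Γ p w w') b

lemma raagρ_apply (w : FreeGroup {v : V // p v}) (b : RAAG (raagD Γ p)) :
    raagρ Γ p w b = raagAct Γ p w b := rfl

open SemidirectProduct

/-- The ambient semidirect product. -/
abbrev raagG : Type u :=
  SemidirectProduct (RAAG (raagD Γ p)) (FreeGroup {v : V // p v}) (raagρ Γ p)

variable [DecidablePred p]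

/-- Generator images for the map into the semidirect product. -/
def raagΦgen (v : V) : raagG Γ p :=
  if h : p v then inr (FreeGroup.of ⟨v, h⟩)
  else inl (raagGen (raagD Γ p) ⟨⟨v, h⟩, QuotientGroup.mk 1⟩)

lemma mk_of_mem_K {t : {v : V // ¬ p v}} {s : {v : V // p v}} (h : Γ.Adj ↑s ↑t) :
    (QuotientGroup.mk (FreeGroup.of s) : FreeGroup {v : V // p v} ⧸ raagK Γ p t)
      = QuotientGroup.mk 1 := by
  rw [QuotientGroup.eq]
  have hmem : FreeGroup.of s ∈
      {x | ∃ s : {v : V // p v}, Γ.Adj ↑s ↑t ∧ x = FreeGroup.of s} := ⟨s, h, rfl⟩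
  rw [mul_one]
  exact Subgroup.inv_mem _ (Subgroup.subset_closure hmem)

lemma raagΦgen_comm (hp : ∀ a b : V, p a → p b → ¬ Γ.Adj a b) :
    ∀ u v : V, Γ.Adj u v → Commute (raagΦgen Γ p u) (raagΦgen Γ p v) := by
  have key : ∀ (a : {v : V // p v}) (b : {v : V // ¬ p v}), Γ.Adj ↑a ↑b →
      Commute (raagΦgen Γ p ↑a) (raagΦgen Γ p ↑b) := by
    intro a b hab
    rw [raagΦgen, raagΦgen, dif_pos a.2, dif_neg b.2]
    have hfix : raagρ Γ p (FreeGroup.of a)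
        (raagGen (raagD Γ p) ⟨b, QuotientGroup.mk 1⟩)
        = raagGen (raagD Γ p) ⟨b, QuotientGroup.mk 1⟩ := by
      rw [raagρ_apply, raagAct_gen]
      congr 1
      refine Sigma.ext rfl ?_
      rw [MulAction.Quotient.smul_mk]
      simp only [smul_eq_mul, mul_one, heq_eq_eq]
      exact mk_of_mem_K Γ p hab
    have h2 := SemidirectProduct.inl_aut (φ := raagρ Γ p) (FreeGroup.of a)
        (raagGen (raagD Γ p) ⟨b, QuotientGroup.mk 1⟩)
    rw [hfix] at h2
    simp only [map_inv] at h2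
    unfold Commute SemiconjBy
    calc inr (FreeGroup.of a) * inl (raagGen (raagD Γ p) ⟨b, QuotientGroup.mk 1⟩)
        = (inr (FreeGroup.of a) * inl (raagGen (raagD Γ p) ⟨b, QuotientGroup.mk 1⟩) *
            (inr (FreeGroup.of a))⁻¹) * inr (FreeGroup.of a) := by group
      _ = inl (raagGen (raagD Γ p) ⟨b, QuotientGroup.mk 1⟩) * inr (FreeGroup.of a) := by
          rw [← h2]
  intro u v huv
  rcases Classical.em (p u) with hu | hu <;> rcases Classical.em (p v) with hv | hv
  · exact absurd huv (hp u v hu hv)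
  · exact key ⟨u, hu⟩ ⟨v, hv⟩ huv
  · exact (key ⟨v, hv⟩ ⟨u, hu⟩ huv.symm).symm
  · rw [raagΦgen, raagΦgen, dif_neg hu, dif_neg hv]
    exact (raagGen_comm (⟨huv, 1, rfl, rfl⟩ :
      (raagD Γ p).Adj ⟨⟨u, hu⟩, QuotientGroup.mk 1⟩ ⟨⟨v, hv⟩, QuotientGroup.mk 1⟩)).map inl

variable (hp : ∀ a b : V, p a → p b → ¬ Γ.Adj a b)

/-- The homomorphism into the semidirect product. -/
def raagΦ : RAAG Γ →* raagG Γ p := raagLift (raagΦgen Γ p) (raagΦgen_comm Γ p hp)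

/-- Conjugation of a generator by an element of the free group. -/
def raagConj (t : {v : V // ¬ p v}) (w : FreeGroup {v : V // p v}) : RAAG Γ :=
  raagι Γ p w * raagGen Γ ↑t * (raagι Γ p w)⁻¹

lemma raagConj_coset (t : {v : V // ¬ p v}) (w : FreeGroup {v : V // p v})
    {k : FreeGroup {v : V // p v}} (hk : k ∈ raagK Γ p t) :
    raagConj Γ p t (w * k) = raagConj Γ p t w := by
  have hcomm : ∀ x ∈ raagK Γ p t, Commute (raagι Γ p x) (raagGen Γ ↑t) := by
    intro x hx
    induction hx using Subgroup.closure_induction with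
    | mem y hy =>
      obtain ⟨s, hs, rfl⟩ := hy
      rw [raagι_of]
      exact raagGen_comm hs
    | one => simpa using Commute.one_left _
    | mul a b _ _ ha hb => rw [map_mul]; exact ha.mul_left hb
    | inv a _ ha => rw [map_inv]; exact ha.inv_left
  have hc := (hcomm k hk).eq
  unfold raagConj
  rw [map_mul, mul_inv_rev]
  calc raagι Γ p w * raagι Γ p k * raagGen Γ ↑t * ((raagι Γ p k)⁻¹ * (raagι Γ p w)⁻¹)
      = raagι Γ p w * (raagι Γ p k * raagGen Γ ↑t * (raagι Γ p k)⁻¹) * (raagι Γ p w)⁻¹ := by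
        group
    _ = raagι Γ p w * raagGen Γ ↑t * (raagι Γ p w)⁻¹ := by rw [hc]; group

/-- Conjugation map on cosets. -/
def raagCmap (t : {v : V // ¬ p v}) :
    (FreeGroup {v : V // p v} ⧸ raagK Γ p t) → RAAG Γ := fun q =>
  Quotient.liftOn' q (raagConj Γ p t) (by
    intro w w' hww
    have h : w⁻¹ * w' ∈ raagK Γ p t := QuotientGroup.leftRel_apply.mp hww
    have : w' = w * (w⁻¹ * w') := by group
    rw [this, raagConj_coset Γ p t w h])

lemma raagCmap_mk (t : {v : V // ¬ p v}) (w : FreeGroup {v : V // p v}) :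
    raagCmap Γ p t (QuotientGroup.mk w) = raagConj Γ p t w := rfl

/-- The homomorphism from the unfolded RAAG back to the RAAG. -/
def raagΨ₀ : RAAG (raagD Γ p) →* RAAG Γ :=
  raagLift (fun x => raagCmap Γ p x.1 x.2) (by
    rintro x y ⟨hadj, u, hx, hy⟩
    show Commute (raagCmap Γ p x.1 x.2) (raagCmap Γ p y.1 y.2)
    rw [hx, hy, raagCmap_mk, raagCmap_mk]
    have h := raagGen_comm hadj
    have := h.map (MulAut.conj (raagι Γ p u)).toMonoidHom
    simpa [raagConj, MulAut.conj_apply, mul_assoc] using this)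

@[simp] lemma raagΨ₀_gen (x : raagDV Γ p) :
    raagΨ₀ Γ p (raagGen (raagD Γ p) x) = raagCmap Γ p x.1 x.2 :=
  raagLift_gen _ _ _

lemma raagΨ₀_compat (w : FreeGroup {v : V // p v}) :
    (raagΨ₀ Γ p).comp (raagρ Γ p w).toMonoidHom
      = (MulAut.conj (raagι Γ p w)).toMonoidHom.comp (raagΨ₀ Γ p) := by
  apply raag_hom_ext
  rintro ⟨t, q⟩
  induction q using Quotient.inductionOn' with
  | h u =>
    have hmk : (Quotient.mk'' u : FreeGroup {v : V // p v} ⧸ raagK Γ p t)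
        = QuotientGroup.mk u := rfl
    simp only [MonoidHom.comp_apply, MulEquiv.coe_toMonoidHom, raagρ_apply, raagAct_gen,
      hmk, MulAction.Quotient.smul_mk, smul_eq_mul, raagΨ₀_gen, raagCmap_mk,
      MulAut.conj_apply, raagConj, map_mul, mul_inv_rev]
    group

/-- The homomorphism from the semidirect product. -/
def raagΨ : raagG Γ p →* RAAG Γ :=
  SemidirectProduct.lift (raagΨ₀ Γ p) (raagι Γ p) (raagΨ₀_compat Γ p)

lemma raagΨ_comp_Φ : (raagΨ Γ p).comp (raagΦ Γ p hp) = MonoidHom.id (RAAG Γ) := by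
  apply raag_hom_ext
  intro v
  simp only [MonoidHom.comp_apply, MonoidHom.id_apply, raagΦ, raagLift_gen]
  by_cases h : p v
  · rw [raagΦgen, dif_pos h, raagΨ, SemidirectProduct.lift_inr, raagι_of]
  · rw [raagΦgen, dif_neg h, raagΨ, SemidirectProduct.lift_inl, raagΨ₀_gen, raagCmap_mk,
      raagConj]
    simp

lemma raagΦ_comp_ι : (raagΦ Γ p hp).comp (raagι Γ p) = SemidirectProduct.inr := by
  apply FreeGroup.ext_hom
  intro s
  simp only [MonoidHom.comp_apply, raagι_of, raagΦ, raagLift_gen, raagΦgen, dif_pos s.2,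
    Subtype.coe_eta]

lemma raagΦ_comp_Ψ : (raagΦ Γ p hp).comp (raagΨ Γ p) = MonoidHom.id (raagG Γ p) := by
  apply SemidirectProduct.hom_ext
  · apply raag_hom_ext
    rintro ⟨t, q⟩
    induction q using Quotient.inductionOn' with
    | h w =>
      have hmk : (Quotient.mk'' w : FreeGroup {v : V // p v} ⧸ raagK Γ p t)
          = QuotientGroup.mk w := rfl
      rw [hmk]
      simp only [MonoidHom.comp_apply, MonoidHom.id_apply, SemidirectProduct.lift_inl, raagΨ,
        SemidirectProduct.lift_inl, raagΨ₀_gen, raagCmap_mk, raagConj]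
      rw [map_mul, map_mul, map_inv]
      have hΦι : ∀ u : FreeGroup {v : V // p v},
          raagΦ Γ p hp (raagι Γ p u) = SemidirectProduct.inr u :=
        fun u => DFunLike.congr_fun (raagΦ_comp_ι Γ p hp) u
      have hgen : raagΦ Γ p hp (raagGen Γ ↑t)
          = SemidirectProduct.inl (raagGen (raagD Γ p) ⟨t, QuotientGroup.mk 1⟩) := by
        show raagLift (raagΦgen Γ p) (raagΦgen_comm Γ p hp) (raagGen Γ ↑t) = _
        rw [raagLift_gen, raagΦgen, dif_neg t.2, Subtype.coe_eta]
      rw [hΦι, hgen]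
      have hact : raagρ Γ p w (raagGen (raagD Γ p) ⟨t, QuotientGroup.mk 1⟩)
          = raagGen (raagD Γ p) ⟨t, QuotientGroup.mk w⟩ := by
        rw [raagρ_apply, raagAct_gen, MulAction.Quotient.smul_mk, smul_eq_mul, mul_one]
      calc SemidirectProduct.inr w *
            SemidirectProduct.inl (raagGen (raagD Γ p) ⟨t, QuotientGroup.mk 1⟩) *
            (SemidirectProduct.inr w)⁻¹
          = SemidirectProduct.inr w *
            SemidirectProduct.inl (raagGen (raagD Γ p) ⟨t, QuotientGroup.mk 1⟩) *
            SemidirectProduct.inr w⁻¹ := by rw [map_inv]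
        _ = SemidirectProduct.inl (raagρ Γ p w (raagGen (raagD Γ p) ⟨t, QuotientGroup.mk 1⟩)) :=
            (SemidirectProduct.inl_aut w _).symm
        _ = SemidirectProduct.inl (raagGen (raagD Γ p) ⟨t, QuotientGroup.mk w⟩) := by rw [hact]
  · apply FreeGroup.ext_hom
    intro s
    simp only [MonoidHom.comp_apply, MonoidHom.id_apply, raagΨ, SemidirectProduct.lift_inr]
    exact DFunLike.congr_fun (raagΦ_comp_ι Γ p hp) (FreeGroup.of s)

/-- The decomposition of the RAAG as a semidirect product. -/
noncomputable def raagEquiv : RAAG Γ ≃* raagG Γ p :=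
  MonoidHom.toMulEquiv (raagΦ Γ p hp) (raagΨ Γ p) (raagΨ_comp_Φ Γ p hp) (raagΦ_comp_Ψ Γ p hp)

end Decomposition

section Induction

open Function

lemma isFreeGroup_surj (G : Type u) [Group G] [IsFreeGroup G] [Nontrivial G] :
    ∃ f : G →* Multiplicative ℤ, Surjective f := by
  have hne : Nonempty (IsFreeGroup.Generators G) := by
    by_contra hempty
    haveI : IsEmpty (IsFreeGroup.Generators G) := not_nonempty_iff.mp hempty
    haveI : Subsingleton (FreeGroup (IsFreeGroup.Generators G)) := by infer_instance
    have := (IsFreeGroup.toFreeGroup (G := G)).injective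
    obtain ⟨a, b, hab⟩ := exists_pair_ne G
    exact hab (this (Subsingleton.elim _ _))
  obtain ⟨a⟩ := hne
  refine ⟨IsFreeGroup.lift (fun _ => Multiplicative.ofAdd 1), fun n => ?_⟩
  refine ⟨IsFreeGroup.of a ^ n.toAdd, ?_⟩
  rw [map_zpow, IsFreeGroup.lift_of]
  rw [← ofAdd_zsmul]
  simp

lemma subgroup_free_surj {X : Type u} (H : Subgroup (FreeGroup X)) (hH : H ≠ ⊥) :
    ∃ f : H →* Multiplicative ℤ, Surjective f := by
  haveI : Nontrivial H := (Subgroup.nontrivial_iff_ne_bot H).mpr hH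
  exact isFreeGroup_surj H

lemma raag_subsingleton {W : Type u} [IsEmpty W] (Δ : SimpleGraph W) :
    Subsingleton (RAAG Δ) := by
  constructor
  intro a b
  obtain ⟨z, rfl⟩ := PresentedGroup.mk_surjective (raagRels Δ) a
  obtain ⟨z', rfl⟩ := PresentedGroup.mk_surjective (raagRels Δ) b
  rw [Subsingleton.elim z z']

lemma raag_key : ∀ (k : ℕ) {W : Type u} (Δ : SimpleGraph W) (c : W → Fin k)
    (_ : ∀ a b : W, Δ.Adj a b → c a ≠ c b) (H : Subgroup (RAAG Δ)), H ≠ ⊥ →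
    ∃ f : H →* Multiplicative ℤ, Surjective f := by
  intro k
  induction k with
  | zero =>
    intro W Δ c hc H hH
    exfalso
    haveI : IsEmpty W := ⟨fun w => (c w).elim0⟩
    haveI := raag_subsingleton Δ
    refine hH ((Subgroup.eq_bot_iff_forall H).mpr fun x _ => Subsingleton.elim x 1)
  | succ k ih =>
    intro W Δ c hc H hH
    classical
    set p : W → Prop := fun w => c w = Fin.last k with hpdef
    have hp : ∀ a b : W, p a → p b → ¬ Δ.Adj a b := fun a b ha hb hab =>
      hc a b hab (ha.trans hb.symm)
    set e := raagEquiv Δ p hp with hedef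
    set H' := H.map e.toMonoidHom with hH'def
    have einj : Injective e.toMonoidHom := e.injective
    have hH' : H' ≠ ⊥ := by
      rw [hH'def, Ne, Subgroup.map_eq_bot_iff_of_injective _ einj]
      exact hH
    have e1 : H ≃* H' := Subgroup.equivMapOfInjective H e.toMonoidHom einj
    by_cases hcase : H'.map (SemidirectProduct.rightHom) = ⊥
    · -- everything lies in the unfolded RAAG
      have hle : H' ≤ (SemidirectProduct.rightHom
          (φ := raagρ Δ p)).ker := by
        intro x hx
        rw [MonoidHom.mem_ker]
        have : SemidirectProduct.rightHom x ∈ H'.map SemidirectProduct.rightHom :=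
          ⟨x, hx, rfl⟩
        rw [hcase] at this
        exact Subgroup.mem_bot.mp this
      rw [← SemidirectProduct.range_inl_eq_ker_rightHom] at hle
      set H₀ := H'.comap (SemidirectProduct.inl (φ := raagρ Δ p)) with hH₀def
      have hmap : H₀.map SemidirectProduct.inl = H' := Subgroup.map_comap_eq_self hle
      have hH₀ : H₀ ≠ ⊥ := by
        intro h0
        rw [h0, Subgroup.map_bot] at hmap
        exact hH' hmap.symm
      have hlt : ∀ x : raagDV Δ p, (c ↑x.1).val < k := fun x =>
        lt_of_le_of_ne (Nat.lt_succ_iff.mp (c ↑x.1).isLt)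
          (fun hh => x.1.2 (Fin.ext hh))
      obtain ⟨f, hf⟩ := ih (raagD Δ p) (fun x => ⟨(c ↑x.1).val, hlt x⟩)
        (by
          rintro x y ⟨hadj, -⟩ hxy
          simp only [Fin.mk.injEq] at hxy
          exact hc _ _ hadj (Fin.val_injective hxy))
        H₀ hH₀
      have e2 : H₀ ≃* H₀.map (SemidirectProduct.inl (φ := raagρ Δ p)) :=
        Subgroup.equivMapOfInjective H₀ _ SemidirectProduct.inl_injective
      have e3 : H₀.map (SemidirectProduct.inl (φ := raagρ Δ p)) ≃* H' :=
        MulEquiv.subgroupCongr hmap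
      have E : H ≃* H₀ := (e1.trans e3.symm).trans e2.symm
      exact ⟨f.comp E.toMonoidHom, hf.comp E.surjective⟩
    · -- nontrivial image in the free group
      obtain ⟨g, hg⟩ := subgroup_free_surj (H'.map SemidirectProduct.rightHom) hcase
      refine ⟨(g.comp ((SemidirectProduct.rightHom).subgroupMap H')).comp e1.toMonoidHom, ?_⟩
      exact hg.comp ((MonoidHom.subgroupMap_surjective _ _).comp e1.surjective)

end Induction

/-- Every non-trivial subgroup of a RAAG over a finite graph surjects onto `ℤ`. -/
theorem subgroup_surjects_onto_int {V : Type u} [Fintype V] (Γ : SimpleGraph V)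
    (H : Subgroup (RAAG Γ)) (hH : H ≠ ⊥) :
    ∃ f : H →* Multiplicative ℤ, Function.Surjective f := by
  classical
  exact raag_key (Fintype.card V) Γ (Fintype.equivFin V)
    (fun a b hab hcc => hab.ne ((Fintype.equivFin V).injective hcc)) H hH
end
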